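/- For every θ ∈ (0, π), G(θ, cot(θ/2), cot(θ/2)) = 0, where cot t = cos t / sin t; that is, the function G vanishes at x = y = cot(θ/2). -/

import Mathlib

open Real

/-- The function `G` of Kloeckner–Kuperberg, Lemma 7.1. -/
noncomputable def G (θ x y : ℝ) : ℝ :=
  Real.sin θ ^ 3 * (x * y) + (Real.cos θ ^ 3 - 3 * Real.cos θ + 2) * (x + y)
    - Real.sin θ ^ 3 - 6 * Real.sin θ - 6 * θ + 6 * Real.pi
    - 6 * Real.arctan x + 2 * x / (1 + x ^ 2)
    - 6 * Real.arctan y + 2 * y / (1 + y ^ 2)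

/-- `cot t = cos t / sin t`. -/
noncomputable def cot (t : ℝ) : ℝ := Real.cos t / Real.sin t

theorem stmt1 (θ : ℝ) (hθ0 : 0 < θ) (hθπ : θ < Real.pi) :
    G θ (_root_.cot (θ / 2)) (_root_.cot (θ / 2)) = 0 := by
  have hpi := Real.pi_pos
  have hs : 0 < Real.sin (θ/2) :=
    Real.sin_pos_of_pos_of_lt_pi (by linarith) (by linarith)
  have hc : 0 < Real.cos (θ/2) :=
    Real.cos_pos_of_mem_Ioo ⟨by linarith, by linarith⟩
  have htan : Real.tan (Real.pi/2 - θ/2) = _root_.cot (θ/2) := by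
    rw [Real.tan_pi_div_two_sub, Real.tan_eq_sin_div_cos, _root_.cot, inv_div]
  have h1 : Real.arctan (_root_.cot (θ/2)) = Real.pi/2 - θ/2 := by
    rw [← htan, Real.arctan_tan (by linarith) (by linarith)]
  have hsin : Real.sin θ = 2 * Real.sin (θ/2) * Real.cos (θ/2) := by
    rw [← Real.sin_two_mul]; ring_nf
  have hpy : Real.sin (θ/2)^2 + Real.cos (θ/2)^2 = 1 := Real.sin_sq_add_cos_sq _
  have hcos : Real.cos θ = Real.cos (θ/2)^2 - Real.sin (θ/2)^2 := by
    have h := Real.cos_two_mul (θ/2)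
    have h2 : 2 * (θ/2) = θ := by ring
    rw [h2] at h
    nlinarith [hpy]
  unfold G _root_.cot
  unfold _root_.cot at h1
  rw [h1, hsin, hcos]
  have hden : 1 + (Real.cos (θ/2) / Real.sin (θ/2))^2 ≠ 0 := by positivity
  field_simp
  linear_combination (-8 * Real.cos (θ/2)^3 + 4 * Real.cos (θ/2)^5
      + 4 * Real.cos (θ/2)^7 - 16 * Real.sin (θ/2)^2 * Real.cos (θ/2)
      + 4 * Real.sin (θ/2)^2 * Real.cos (θ/2)^5 - 4 * Real.sin (θ/2)^4 * Real.cos (θ/2)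
      - 4 * Real.sin (θ/2)^4 * Real.cos (θ/2)^3
      - 4 * Real.sin (θ/2)^6 * Real.cos (θ/2)) * hpy
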